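/- Let $W, \mathbb{W} : \mathbb{R} \to [0,\infty)$ be continuous functions vanishing on $(-\infty,0)$, and suppose that for all $x \ge 0$, $\delta \int_0^x \mathbb{W}(x-y) W(y)\,dy = \overline{\mathbb{W}}(x) - \overline{W}(x)$, where $\overline{W}(x) = \int_0^x W$, $\overline{\mathbb{W}}(x) = \int_0^x \mathbb{W}$. Then with $Z(y) := 1 + q\int_0^y W$, $\overline{Z}(x) := \int_0^x Z$, $\mathbb{Z}$ and $\overline{\mathbb{Z}}$ defined analogously from $\mathbb{W}$, one has $\delta \int_0^x \mathbb{W}(x-y) Z(y)\,dy = \overline{\mathbb{Z}}(x) - \overline{Z}(x) + \delta\overline{\mathbb{W}}(x)$ for all $x \ge 0$. -/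
import Mathlib

open intervalIntegral MeasureTheory

theorem stmt1 (q δ : ℝ) (hq : 0 < q) (hδ : 0 < δ)
    (W 𝕎 : ℝ → ℝ)
    (hWc : Continuous W) (h𝕎c : Continuous 𝕎)
    (hWnn : ∀ x, 0 ≤ W x) (h𝕎nn : ∀ x, 0 ≤ 𝕎 x)
    (hWneg : ∀ x < (0:ℝ), W x = 0) (h𝕎neg : ∀ x < (0:ℝ), 𝕎 x = 0)
    (hconv : ∀ x ≥ (0:ℝ),
      δ * ∫ y in (0:ℝ)..x, 𝕎 (x - y) * W y
        = (∫ y in (0:ℝ)..x, 𝕎 y) - ∫ y in (0:ℝ)..x, W y)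
    (Z ℤZ : ℝ → ℝ)
    (hZ : ∀ y, Z y = 1 + q * ∫ w in (0:ℝ)..y, W w)
    (hℤZ : ∀ y, ℤZ y = 1 + q * ∫ w in (0:ℝ)..y, 𝕎 w) :
    ∀ x ≥ (0:ℝ),
      δ * ∫ y in (0:ℝ)..x, 𝕎 (x - y) * Z y
        = (∫ z in (0:ℝ)..x, ℤZ z) - (∫ z in (0:ℝ)..x, Z z)
          + δ * ∫ y in (0:ℝ)..x, 𝕎 y := by
  -- W vanishes at 0 too, by continuity
  have hW0 : W 0 = 0 := by
    have h1 : Filter.Tendsto W (nhdsWithin 0 (Set.Iio 0)) (nhds (W 0)) :=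
      (hWc.tendsto 0).mono_left nhdsWithin_le_nhds
    have h2 : Filter.Tendsto W (nhdsWithin 0 (Set.Iio 0)) (nhds 0) := by
      refine Filter.Tendsto.congr' ?_ tendsto_const_nhds
      filter_upwards [self_mem_nhdsWithin] with x hx
      exact (hWneg x hx).symm
    exact tendsto_nhds_unique h1 h2
  have hWneg' : ∀ x ≤ (0:ℝ), W x = 0 := fun x hx =>
    hx.lt_or_eq.elim (hWneg x) (fun h => h ▸ hW0)
  -- continuity of primitives
  have hWbc : Continuous fun y => ∫ w in (0:ℝ)..y, W w :=
    intervalIntegral.continuous_primitive (fun a b => hWc.intervalIntegrable a b) 0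
  have h𝕎bc : Continuous fun y => ∫ w in (0:ℝ)..y, 𝕎 w :=
    intervalIntegral.continuous_primitive (fun a b => h𝕎c.intervalIntegrable a b) 0
  intro t ht
  -- Key Fubini identity
  have key : (∫ y in (0:ℝ)..t, 𝕎 (t - y) * ∫ w in (0:ℝ)..y, W w)
      = ∫ x in (0:ℝ)..t, ∫ y in (0:ℝ)..x, 𝕎 (x - y) * W y := by
    -- step a : change of variables y ↦ t - y
    have ha : (∫ y in (0:ℝ)..t, 𝕎 (t - y) * ∫ w in (0:ℝ)..y, W w)
        = ∫ y in (0:ℝ)..t, 𝕎 y * ∫ w in (0:ℝ)..(t - y), W w := by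
      have := intervalIntegral.integral_comp_sub_left
        (a := (0:ℝ)) (b := t) (fun y => 𝕎 y * ∫ w in (0:ℝ)..(t - y), W w) t
      simpa [sub_sub_cancel] using this
    -- step b : rewrite inner primitive as an integral over [0,t]
    have hb : ∀ y ∈ Set.uIcc (0:ℝ) t,
        𝕎 y * (∫ w in (0:ℝ)..(t - y), W w) = 𝕎 y * ∫ x in (0:ℝ)..t, W (x - y) := by
      intro y hy
      rw [Set.uIcc_of_le ht] at hy
      have hy0 : 0 ≤ y := hy.1
      have h1 : (∫ x in (0:ℝ)..t, W (x - y)) = ∫ u in (0 - y)..(t - y), W u :=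
        intervalIntegral.integral_comp_sub_right W y
      have h2 : (∫ u in (-y)..(0:ℝ), W u) = 0 := by
        have hz : Set.EqOn W 0 (Set.uIcc (-y) 0) := by
          intro w hw
          rw [Set.uIcc_of_le (by linarith)] at hw
          exact hWneg' w hw.2
        rw [intervalIntegral.integral_congr hz]
        simp
      have h3 := intervalIntegral.integral_add_adjacent_intervals
        (a := -y) (b := (0:ℝ)) (c := t - y) (f := W) (μ := volume)
        (hWc.intervalIntegrable _ _) (hWc.intervalIntegrable _ _)
      rw [h1]
      rw [zero_sub, ← h3, h2, zero_add]
    -- step c : pull the factor inside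
    have hc : (∫ y in (0:ℝ)..t, 𝕎 y * ∫ x in (0:ℝ)..t, W (x - y))
        = ∫ y in (0:ℝ)..t, ∫ x in (0:ℝ)..t, 𝕎 y * W (x - y) := by
      simp_rw [intervalIntegral.integral_const_mul]
    -- step d : Fubini on the square
    have hd : (∫ y in (0:ℝ)..t, ∫ x in (0:ℝ)..t, 𝕎 y * W (x - y))
        = ∫ x in (0:ℝ)..t, ∫ y in (0:ℝ)..t, 𝕎 y * W (x - y) := by
      rw [intervalIntegral.integral_of_le ht, intervalIntegral.integral_of_le ht]
      simp_rw [intervalIntegral.integral_of_le ht]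
      apply MeasureTheory.integral_integral_swap
      have hcont : Continuous fun p : ℝ × ℝ => 𝕎 p.1 * W (p.2 - p.1) :=
        (h𝕎c.comp continuous_fst).mul (hWc.comp (continuous_snd.sub continuous_fst))
      rw [Measure.prod_restrict, ← Measure.volume_eq_prod]
      have : IntegrableOn (fun p : ℝ × ℝ => 𝕎 p.1 * W (p.2 - p.1))
          (Set.Ioc (0:ℝ) t ×ˢ Set.Ioc (0:ℝ) t) volume := by
        apply IntegrableOn.mono_set
          (hcont.continuousOn.integrableOn_compact
            ((isCompact_Icc (a := (0:ℝ)) (b := t)).prod (isCompact_Icc (a := (0:ℝ)) (b := t))))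
        exact Set.prod_mono Set.Ioc_subset_Icc_self Set.Ioc_subset_Icc_self
      exact this
    -- step e : restrict the inner integral
    have he : (∫ x in (0:ℝ)..t, ∫ y in (0:ℝ)..t, 𝕎 y * W (x - y))
        = ∫ x in (0:ℝ)..t, ∫ y in (0:ℝ)..x, 𝕎 y * W (x - y) := by
      apply intervalIntegral.integral_congr
      intro x hx
      rw [Set.uIcc_of_le ht] at hx
      have h4 : (∫ y in x..t, 𝕎 y * W (x - y)) = 0 := by
        have hz : Set.EqOn (fun y => 𝕎 y * W (x - y)) 0 (Set.uIcc x t) := by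
          intro y hy
          rw [Set.uIcc_of_le hx.2] at hy
          simp [hWneg' (x - y) (by linarith [hy.1])]
        rw [intervalIntegral.integral_congr hz]
        simp
      show (∫ y in (0:ℝ)..t, 𝕎 y * W (x - y)) = ∫ y in (0:ℝ)..x, 𝕎 y * W (x - y)
      have hic : Continuous fun y => 𝕎 y * W (x - y) := by fun_prop
      rw [← intervalIntegral.integral_add_adjacent_intervals (a := (0:ℝ)) (b := x) (c := t)
        (f := fun y => 𝕎 y * W (x - y)) (hic.intervalIntegrable _ _) (hic.intervalIntegrable _ _),
        h4, add_zero]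
    -- step f : change of variables in inner integral
    have hf : ∀ x ∈ Set.uIcc (0:ℝ) t,
        (∫ y in (0:ℝ)..x, 𝕎 y * W (x - y)) = ∫ y in (0:ℝ)..x, 𝕎 (x - y) * W y := by
      intro x _
      have := intervalIntegral.integral_comp_sub_left
        (a := (0:ℝ)) (b := x) (fun y => 𝕎 (x - y) * W y) x
      simpa [sub_sub_cancel] using this
    rw [ha, intervalIntegral.integral_congr hb, hc, hd, he]
    exact intervalIntegral.integral_congr hf
  -- now linearity
  have hWb_int : IntervalIntegrable (fun y => ∫ w in (0:ℝ)..y, W w) volume 0 t :=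
    hWbc.intervalIntegrable _ _
  have h𝕎b_int : IntervalIntegrable (fun y => ∫ w in (0:ℝ)..y, 𝕎 w) volume 0 t :=
    h𝕎bc.intervalIntegrable _ _
  have hlhs : (∫ y in (0:ℝ)..t, 𝕎 (t - y) * Z y)
      = (∫ y in (0:ℝ)..t, 𝕎 (t - y))
        + q * ∫ y in (0:ℝ)..t, 𝕎 (t - y) * ∫ w in (0:ℝ)..y, W w := by
    have : (fun y => 𝕎 (t - y) * Z y)
        = fun y => 𝕎 (t - y) + q * (𝕎 (t - y) * ∫ w in (0:ℝ)..y, W w) := by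
      funext y; rw [hZ y]; ring
    rw [this, intervalIntegral.integral_add, intervalIntegral.integral_const_mul]
    · exact (h𝕎c.comp (continuous_const.sub continuous_id)).intervalIntegrable _ _
    · exact (continuous_const.mul
        (((h𝕎c.comp (continuous_const.sub continuous_id))).mul hWbc)).intervalIntegrable _ _
  have hcomp : (∫ y in (0:ℝ)..t, 𝕎 (t - y)) = ∫ y in (0:ℝ)..t, 𝕎 y := by
    have := intervalIntegral.integral_comp_sub_left (a := (0:ℝ)) (b := t) 𝕎 t
    simpa using this
  have hZint : (∫ z in (0:ℝ)..t, Z z) = t + q * ∫ z in (0:ℝ)..t, ∫ w in (0:ℝ)..z, W w := by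
    have : (fun z => Z z) = fun z => 1 + q * ∫ w in (0:ℝ)..z, W w := funext hZ
    rw [this, intervalIntegral.integral_add (intervalIntegrable_const)
      (hWb_int.const_mul q), intervalIntegral.integral_const_mul]
    simp
  have hℤint : (∫ z in (0:ℝ)..t, ℤZ z) = t + q * ∫ z in (0:ℝ)..t, ∫ w in (0:ℝ)..z, 𝕎 w := by
    have : (fun z => ℤZ z) = fun z => 1 + q * ∫ w in (0:ℝ)..z, 𝕎 w := funext hℤZ
    rw [this, intervalIntegral.integral_add (intervalIntegrable_const)
      (h𝕎b_int.const_mul q), intervalIntegral.integral_const_mul]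
    simp
  -- integrated convolution identity
  have hint : δ * (∫ x in (0:ℝ)..t, ∫ y in (0:ℝ)..x, 𝕎 (x - y) * W y)
      = (∫ z in (0:ℝ)..t, ∫ w in (0:ℝ)..z, 𝕎 w) - ∫ z in (0:ℝ)..t, ∫ w in (0:ℝ)..z, W w := by
    rw [← intervalIntegral.integral_const_mul]
    rw [intervalIntegral.integral_congr (g := fun x =>
      (∫ w in (0:ℝ)..x, 𝕎 w) - ∫ w in (0:ℝ)..x, W w) ?_]
    · exact intervalIntegral.integral_sub h𝕎b_int hWb_int
    · intro x hx
      rw [Set.uIcc_of_le ht] at hx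
      exact hconv x hx.1
  have hB : δ * (∫ y in (0:ℝ)..t, 𝕎 (t - y) * ∫ w in (0:ℝ)..y, W w)
      = (∫ z in (0:ℝ)..t, ∫ w in (0:ℝ)..z, 𝕎 w) - ∫ z in (0:ℝ)..t, ∫ w in (0:ℝ)..z, W w := by
    rw [key]; exact hint
  rw [hlhs, hcomp, hZint, hℤint]
  linear_combination q * hB
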